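/- arXiv:2405.19583 — 3 statements merged into one kernel-verified Lean document; each statement's English description precedes it below -/
import Mathlib

section
/- For every k ≥ 1, every branch γ ∈ Γ^{(k)}, and every element n ∈ 𝔑^{(k,γ)} with flattening (m_1, …, m_{2pσ(γ)}), one has 𝔠^{(k,γ)}(n) = ∏_{j=1}^{2pσ(γ)} {c(m_j)}^{*[j−1]}. -/
open scoped BigOperators
noncomputable section

/-- `Gamma P k` is the branch set `Γ^{(k+1)}` (index shifted by one):
`Γ^{(1)} = {0,1}` is `Bool` (`false` is the branch `0`), and
`Γ^{(k+1)} = {0} ⊔ (Γ^{(k)})^P` is `Option (Fin P → Gamma P (k-1))`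
(`none` is the branch `0`). -/
def Gamma (P : ℕ) : ℕ → Type
  | 0 => Bool
  | k+1 => Option (Fin P → Gamma P k)

instance GammaFintype (P : ℕ) : ∀ k, Fintype (Gamma P k)
  | 0 => inferInstanceAs (Fintype Bool)
  | k+1 => letI := GammaFintype P k; inferInstanceAs (Fintype (Option (Fin P → Gamma P k)))

/-- The first counting function σ (values in ℚ). -/
def sigmaF (p : ℕ) : ∀ k, Gamma (2*p+1) k → ℚ
  | 0, false => 1/(2*p)
  | 0, true => (2*p+1)/(2*p)
  | _+1, none => 1/(2*p)
  | k+1, some f => ∑ j : Fin (2*p+1), sigmaF p k (f j)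

/-- The second counting function ℓ (values in ℕ). -/
def ellF (P : ℕ) : ∀ k, Gamma P k → ℕ
  | 0, false => 0
  | 0, true => 1
  | _+1, none => 0
  | k+1, some f => 1 + ∑ j : Fin P, ellF P k (f j)

/-- The denominator function 𝔇. -/
def dF (P : ℕ) : ∀ k, Gamma P k → ℕ
  | 0, _ => 1
  | _+1, none => 1
  | k+1, some f => (1 + ∑ j : Fin P, ellF P k (f j)) * ∏ j : Fin P, dF P k (f j)

/-- The combinatorial lattice space 𝔑^{(k,γ)}. -/
def NLat (ν P : ℕ) : ∀ k, Gamma P k → Type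
  | 0, false => Fin ν → ℤ
  | 0, true => Fin P → Fin ν → ℤ
  | _+1, none => Fin ν → ℤ
  | k+1, some f => ∀ j : Fin P, NLat ν P k (f j)

/-- Flattening of an element of the combinatorial lattice space: the list of its
ℤ^ν components read from left to right. -/
def flat (ν P : ℕ) : ∀ k, ∀ γ : Gamma P k, NLat ν P k γ → List (Fin ν → ℤ)
  | 0, false, n => [n]
  | 0, true, n => List.ofFn n
  | _+1, none, n => [n]
  | k+1, some f, n => (List.ofFn fun j : Fin P => flat ν P k (f j) (n j)).flatten

/-- The combinatorial alternating sum `cas`. -/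
def cas (ν P : ℕ) : ∀ k, ∀ γ : Gamma P k, NLat ν P k γ → (Fin ν → ℤ)
  | 0, false, n => n
  | 0, true, n => ∑ j : Fin P, ((-1:ℤ))^(j:ℕ) • n j
  | _+1, none, n => n
  | k+1, some f, n => ∑ j : Fin P, ((-1:ℤ))^(j:ℕ) • cas ν P k (f j) (n j)

/-- `cstar m z = z^{*[m]}`: `z` if `m` is even, `conj z` if `m` is odd. -/
def cstar (m : ℕ) (z : ℂ) : ℂ := if Even m then z else (starRingEnd ℂ) z

/-- ⟨n⟩ = n·ω. -/
def ip (ν : ℕ) (ω : Fin ν → ℝ) (n : Fin ν → ℤ) : ℝ := ∑ j, (n j : ℝ) * ω j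

/-- ℓ¹ norm |n| = Σ |n_j| (as a real number). -/
def anorm (ν : ℕ) (n : Fin ν → ℤ) : ℝ := ∑ j, |(n j : ℝ)|

/-- `𝔠^{(k,γ)}`, the product of (conjugated) initial data along a branch. -/
def fC (ν P : ℕ) (c : (Fin ν → ℤ) → ℂ) : ∀ k, ∀ γ : Gamma P k, NLat ν P k γ → ℂ
  | 0, false, n => c n
  | 0, true, n => ∏ j : Fin P, cstar j (c (n j))
  | _+1, none, n => c n
  | k+1, some f, n => ∏ j : Fin P, cstar j (fC ν P c k (f j) (n j))

/-- `𝔦^{(k,γ)}`, the iterated oscillatory integrals along a branch. -/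
noncomputable def fI (ν P : ℕ) (ω : Fin ν → ℝ) : ∀ k, ∀ γ : Gamma P k, ℝ → NLat ν P k γ → ℂ
  | 0, false, t, n => Complex.exp (-Complex.I * ((ip ν ω n)^2 : ℝ) * (t : ℝ))
  | 0, true, t, n => ∫ s in (0:ℝ)..t,
      Complex.exp (-Complex.I * ((ip ν ω (cas ν P 0 true n))^2 : ℝ) * ((t - s : ℝ) : ℂ)) *
        ∏ j : Fin P, cstar j (Complex.exp (-Complex.I * ((ip ν ω (n j))^2 : ℝ) * (s : ℂ)))
  | _+1, none, t, n => Complex.exp (-Complex.I * ((ip ν ω n)^2 : ℝ) * (t : ℝ))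
  | k+1, some f, t, n => ∫ s in (0:ℝ)..t,
      Complex.exp (-Complex.I * ((ip ν ω (cas ν P (k+1) (some f) n))^2 : ℝ) * ((t - s : ℝ) : ℂ)) *
        ∏ j : Fin P, cstar j (fI ν P ω k (f j) s (n j))

/-- The Picard iteration for the Fourier coefficients of cNLS. -/
noncomputable def picard (ν p : ℕ) (ω : Fin ν → ℝ) (c : (Fin ν → ℤ) → ℂ) :
    ℕ → ℝ → (Fin ν → ℤ) → ℂ
  | 0, t, n => Complex.exp (-Complex.I * ((ip ν ω n)^2 : ℝ) * (t : ℝ)) * c n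
  | k+1, t, n => Complex.exp (-Complex.I * ((ip ν ω n)^2 : ℝ) * (t : ℝ)) * c n
      + Complex.I * ∫ s in (0:ℝ)..t,
          Complex.exp (-Complex.I * ((ip ν ω n)^2 : ℝ) * ((t - s : ℝ) : ℂ)) *
          ∑' m : {m : Fin (2*p+1) → (Fin ν → ℤ) // ∑ j : Fin (2*p+1), ((-1:ℤ))^(j:ℕ) • m j = n},
            ∏ j : Fin (2*p+1), cstar j (picard ν p ω c k s (m.1 j))

/-- Real zeta: ζ(s) = Σ_{n≥1} n^{-s}. -/
noncomputable def zetaR (s : ℝ) : ℝ := ∑' n : ℕ, ((n : ℝ) + 1) ^ (-s)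

/-- The bound 𝔟(s;ν). -/
noncomputable def bB (s : ℝ) (ν : ℕ) : ℝ :=
  1 + ∑ j ∈ Finset.Icc 1 ν, (ν.choose j : ℝ) * 2^j * (j : ℝ)^(-s) * (zetaR (s/j))^j

section Aux

variable {X : Type*}

/-- Product of `h i x_i` over a list with starting index `a`. -/
def prodFrom (h : ℕ → X → ℂ) : ℕ → List X → ℂ
  | _, [] => 1
  | a, x :: L => h a x * prodFrom h (a+1) L

theorem prodFrom_eq_prod (h : ℕ → X → ℂ) :
    ∀ (L : List X) (a : ℕ), prodFrom h a L = ∏ i : Fin L.length, h (a + i) (L.get i)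
  | [], a => by simp [prodFrom]
  | x :: L, a => by
    rw [prodFrom, prodFrom_eq_prod h L (a+1)]
    simp only [List.length_cons]
    rw [Fin.prod_univ_succ]
    simp [Nat.add_assoc, Nat.add_comm 1]

theorem cstar_congr {a b : ℕ} (hab : a % 2 = b % 2) : cstar a = cstar b := by
  funext z
  simp [cstar, Nat.even_iff, hab]

theorem cstar_cstar (a b : ℕ) (z : ℂ) : cstar a (cstar b z) = cstar (a + b) z := by
  unfold cstar
  by_cases ha : Even a <;> by_cases hb : Even b <;>
    simp [ha, hb, Nat.even_add, Complex.conj_conj]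

theorem cstar_prod {ι : Type*} (s : Finset ι) (a : ℕ) (f : ι → ℂ) :
    cstar a (∏ j ∈ s, f j) = ∏ j ∈ s, cstar a (f j) := by
  unfold cstar
  by_cases ha : Even a <;> simp [ha, map_prod]

theorem prodFrom_parity (h : ℕ → X → ℂ)
    (hpar : ∀ a b : ℕ, a % 2 = b % 2 → h a = h b) :
    ∀ (L : List X) (a b : ℕ), a % 2 = b % 2 → prodFrom h a L = prodFrom h b L
  | [], a, b, _ => rfl
  | x :: L, a, b, hab => by
    rw [prodFrom, prodFrom, hpar a b hab,
      prodFrom_parity h hpar L (a+1) (b+1) (by omega)]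

theorem prodFrom_flatten (h : ℕ → X → ℂ)
    (hpar : ∀ a b : ℕ, a % 2 = b % 2 → h a = h b) :
    ∀ (Ls : List (List X)) (a : ℕ), (∀ L ∈ Ls, Odd L.length) →
      prodFrom h a Ls.flatten = prodFrom (fun b L => prodFrom h b L) a Ls
  | [], a, _ => rfl
  | L :: Ls, a, hodd => by
    have hL : Odd L.length := hodd L (by simp)
    have hLs : ∀ L' ∈ Ls, Odd L'.length := fun L' hL' => hodd L' (by simp [hL'])
    have happ : ∀ (L1 L2 : List X) (a : ℕ),
        prodFrom h a (L1 ++ L2) = prodFrom h a L1 * prodFrom h (a + L1.length) L2 := by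
      intro L1
      induction L1 with
      | nil => simp [prodFrom]
      | cons x L1 ih =>
        intro L2 a
        simp [prodFrom, ih, mul_assoc, Nat.add_assoc, Nat.add_comm 1]
    rw [List.flatten_cons, happ, prodFrom]
    congr 1
    rw [prodFrom_parity h hpar _ (a + L.length) (a + 1) (by obtain ⟨m, hm⟩ := hL; omega),
      prodFrom_flatten h hpar Ls (a+1) hLs]

theorem prodFrom_ofFn (h : ℕ → X → ℂ) {P : ℕ} (g : Fin P → X) (a : ℕ) :
    prodFrom h a (List.ofFn g) = ∏ j : Fin P, h (a + j) (g j) := by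
  rw [prodFrom_eq_prod]
  rw [← (Fin.castOrderIso (List.length_ofFn : (List.ofFn g).length = P)).toEquiv.prod_comp]
  apply Finset.prod_congr rfl
  intro i _
  simp only [List.get_ofFn]
  rfl

theorem flat_length_odd (ν P : ℕ) (hP : Odd P) :
    ∀ k (γ : Gamma P k) (n : NLat ν P k γ), Odd (flat ν P k γ n).length
  | 0, false, n => by simp [flat]; exact ⟨0, rfl⟩
  | 0, true, n => by show Odd (List.ofFn (n : Fin P → Fin ν → ℤ)).length; exact (congrArg Odd (List.length_ofFn : (List.ofFn (n : Fin P → Fin ν → ℤ)).length = P)).mpr hP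
  | k+1, none, n => by simp [flat]; exact ⟨0, rfl⟩
  | k+1, some f, n => by
    show Odd (List.ofFn fun j : Fin P => flat ν P k (f j) (n j)).flatten.length
    rw [List.length_flatten, List.map_ofFn, List.sum_ofFn]
    have h1 : ∀ j : Fin P, (flat ν P k (f j) (n j)).length % 2 = 1 := fun j =>
      Nat.odd_iff.mp (flat_length_odd ν P hP k (f j) (n j))
    rw [Nat.odd_iff, Finset.sum_nat_mod]
    simp only [Function.comp, h1]
    simpa [Nat.odd_iff] using hP

theorem fC_main (ν P : ℕ) (hP : Odd P) (c : (Fin ν → ℤ) → ℂ) :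
    ∀ k (γ : Gamma P k) (n : NLat ν P k γ) (a : ℕ),
      cstar a (fC ν P c k γ n)
        = prodFrom (fun b m => cstar b (c m)) a (flat ν P k γ n)
  | 0, false, n, a => by simp [fC, flat, prodFrom]
  | 0, true, n, a => by
    show cstar a (∏ j : Fin P, cstar (j : ℕ) (c (n j)))
        = prodFrom (fun b m => cstar b (c m)) a (List.ofFn n)
    rw [cstar_prod]; refine Eq.trans ?_ (prodFrom_ofFn (fun b m => cstar b (c m)) (n : Fin P → Fin ν → ℤ) a).symm
    exact Finset.prod_congr rfl fun j _ => cstar_cstar a j (c (n j))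
  | k+1, none, n, a => by simp [fC, flat, prodFrom]
  | k+1, some f, n, a => by
    have hpar : ∀ a b : ℕ, a % 2 = b % 2 →
        (fun m => cstar a (c m)) = (fun m => cstar b (c m)) := by
      intro a b hab; funext m; rw [cstar_congr hab]
    show cstar a (∏ j : Fin P, cstar (j : ℕ) (fC ν P c k (f j) (n j)))
        = prodFrom (fun b m => cstar b (c m)) a
            (List.ofFn fun j : Fin P => flat ν P k (f j) (n j)).flatten
    rw [prodFrom_flatten _ hpar _ _ (by
        intro L hL
        simp only [List.mem_ofFn] at hL
        obtain ⟨j, rfl⟩ := hL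
        exact flat_length_odd ν P hP k (f j) (n j)),
      prodFrom_ofFn, cstar_prod]
    apply Finset.prod_congr rfl
    intro j _
    rw [cstar_cstar a j, fC_main ν P hP c k (f j) (n j) (a + j)]

end Aux

/-- 𝔠^{(k,γ)}(n) = ∏_{j=1}^{2pσ(γ)} {c(m_j)}^{*[j−1]} where (m_j) is the
flattening of n. -/
theorem statement5 (ν p : ℕ) (hν : 2 ≤ ν) (hp : 1 ≤ p) (c : (Fin ν → ℤ) → ℂ)
    (k : ℕ) (γ : Gamma (2*p+1) k) (n : NLat ν (2*p+1) k γ) :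
    fC ν (2*p+1) c k γ n
      = ∏ i : Fin (flat ν (2*p+1) k γ n).length,
          cstar i (c ((flat ν (2*p+1) k γ n).get i)) := by
  have h := fC_main ν (2*p+1) ⟨p, by ring⟩ c k γ n 0
  rw [show cstar 0 (fC ν (2*p+1) c k γ n) = fC ν (2*p+1) c k γ n from by
      simp [cstar]] at h
  rw [h, prodFrom_eq_prod]
  simp

end
end

section
/- Let r > 8, 2 ≤ ν < r/4, B > 0, ε ∈ ℝ, and T > 0. Suppose 𝚌 : [0,T] × ℤ^ν → ℂ satisfies the ε-integral equation 𝚌(t,n) = e^{−i⟨n⟩²t} c(n) + i ε ∫_0^t e^{−i⟨n⟩²(t−s)} Σ_{(n_1,…,n_P)∈(ℤ^ν)^P with Σ_{j=1}^P (−1)^{j−1} n_j = n} ∏_{j=1}^P {𝚌(s,n_j)}^{*[j−1]} ds for all t ∈ [0,T] and n ∈ ℤ^ν, together with the uniform decay bound |𝚌(t,n)| ≤ B (1+|n|)^{−r/2} for all (t,n) ∈ [0,T] × ℤ^ν. Then for every t ∈ [0,T] and every x ∈ ℝ, |Σ_{n∈ℤ^ν} (𝚌(t,n) − e^{−i⟨n⟩²t}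 c(n)) e^{i⟨n⟩x}| ≤ |ε| · t · B^P · 𝔟(r/4;ν)^{P+1}. In particular, taking t = |ε|^{−1+η} with 0 < η < 1, the sup-norm distance between the nonlinear and linear solutions is at most |ε|^η · B^P · 𝔟(r/4;ν)^{P+1}, which tends to 0 as ε → 0. -/
open scoped BigOperators
noncomputable section

lemma hasSum_zetaR {s : ℝ} (hs : 1 < s) : HasSum (fun n : ℕ => ((n:ℝ)+1)^(-s)) (zetaR s) := by
  have h : Summable (fun n : ℕ => ((n:ℝ)+1)^(-s)) := by
    have h0 := (Real.summable_nat_rpow (p := -s)).2 (by linarith)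
    have h1 := (summable_nat_add_iff 1).2 h0
    simpa [Nat.cast_add] using h1
  simpa [zetaR] using h.hasSum

lemma hasSum_int_abs {s : ℝ} (hs : 1 < s) :
    HasSum (fun k : ℤ => if k = 0 then 0 else |(k:ℝ)|^(-s)) (2 * zetaR s) := by
  have hz := hasSum_zetaR hs
  set F : ℤ → ℝ := fun k => if k = 0 then 0 else |(k:ℝ)|^(-s) with hF
  have h1 : HasSum (fun n : ℕ => F n) (zetaR s) := by
    have key : HasSum (fun n : ℕ => F ((n:ℕ)+1)) (zetaR s) := by
      convert hz using 2 with n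
      have hne : ((n:ℕ)+1 : ℤ) ≠ 0 := by positivity
      simp only [hF, Int.cast_add, Int.cast_natCast, Int.cast_one, if_neg hne, Nat.cast_add,
        Nat.cast_one]
      rw [abs_of_nonneg (by positivity)]
    have h := (hasSum_nat_add_iff (f := fun n : ℕ => F n) 1).1 (by exact_mod_cast key)
    simpa [hF] using h
  have h2 : HasSum (fun n : ℕ => F (-((n:ℤ) + 1))) (zetaR s) := by
    convert hz using 2 with n
    have hne : (-((n:ℤ) + 1) : ℤ) ≠ 0 := by intro h; omega
    simp only [hF, if_neg hne]
    rw [show ((-((n:ℤ)+1) : ℤ) : ℝ) = -((n:ℝ)+1) by push_cast; ring]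
    rw [abs_neg, abs_of_nonneg (by positivity)]
  have h3 := HasSum.of_nat_of_neg_add_one h1 h2
  convert h3 using 1
  ring

lemma hasSum_int_ne_zero {s : ℝ} (hs : 1 < s) :
    HasSum (fun k : {k : ℤ // k ≠ 0} => |((k : ℤ):ℝ)|^(-s)) (2 * zetaR s) := by
  have h := hasSum_int_abs hs
  rw [show (fun k : ℤ => if k = 0 then (0:ℝ) else |(k:ℝ)|^(-s)) =
      Set.indicator {k : ℤ | k ≠ 0} (fun k => |(k:ℝ)|^(-s)) by
    funext k
    by_cases hk : k = 0 <;> simp [Set.indicator_apply, hk]] at h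
  exact (hasSum_subtype_iff_indicator (s := {k : ℤ | k ≠ 0})).2 h

lemma summable_int_one_add {s : ℝ} (hs : 1 < s) :
    Summable (fun k : ℤ => (1+|(k:ℝ)|)^(-s)) := by
  have hz := (hasSum_zetaR hs).summable
  apply Summable.of_nat_of_neg_add_one
  · apply hz.congr
    intro n
    simp [abs_of_nonneg (by positivity : (0:ℝ) ≤ (n:ℝ)), add_comm]
  · have hz2 := (summable_nat_add_iff 1).2 hz
    apply hz2.congr
    intro n
    rw [show ((-((n:ℤ)+1) : ℤ) : ℝ) = -((n:ℝ)+1) by push_cast; ring]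
    rw [abs_neg, abs_of_nonneg (by positivity)]
    push_cast
    ring_nf

set_option maxHeartbeats 800000 in
lemma hasSum_pi_prod_fin {β : Type*} {f : β → ℝ} (hnn : ∀ b, 0 ≤ f b) :
    ∀ (n : ℕ) {a : ℝ}, HasSum f a → HasSum (fun m : Fin n → β => ∏ i, f (m i)) (a ^ n) := by
  intro n
  induction n with
  | zero =>
    intro a hf
    have h : HasSum (fun m : Fin 0 → β => ∏ i, f (m i))
        ((fun m : Fin 0 → β => ∏ i, f (m i)) (fun i => i.elim0)) :=
      hasSum_single _ (fun b hb => absurd (Subsingleton.elim _ _) hb)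
    simpa using h
  | succ n ih =>
    intro a hf
    have hg : HasSum (fun m : Fin n → β => ∏ i, f (m i)) (a^n) := ih hf
    have hf0 : (0 : β → ℝ) ≤ f := fun b => hnn b
    have hg0 : (0 : (Fin n → β) → ℝ) ≤ fun m : Fin n → β => ∏ i, f (m i) :=
      fun m => Finset.prod_nonneg fun _ _ => hnn _
    have hsummable : Summable (fun q : β × (Fin n → β) => f q.1 * ∏ i, f (q.2 i)) :=
      Summable.mul_of_nonneg (f := f) (g := fun m : Fin n → β => ∏ i, f (m i))
        hf.summable hg.summable hf0 hg0
    have h1 : HasSum (fun q : β × (Fin n → β) => f q.1 * ∏ i, f (q.2 i)) (a * a^n) :=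
      HasSum.mul (f := f) (g := fun m : Fin n → β => ∏ i, f (m i)) hf hg hsummable
    have h2 := (((Fin.consEquiv (fun _ : Fin (n+1) => β)).symm).hasSum_iff).2 h1
    rw [pow_succ']
    refine h2.congr_fun fun m => ?_
    simp only [Function.comp_apply, Fin.consEquiv_symm_apply]
    rw [Fin.prod_univ_succ]
    rfl

lemma hasSum_pi_prod {ι β : Type*} [Fintype ι] {f : β → ℝ} (hnn : ∀ b, 0 ≤ f b)
    {a : ℝ} (hf : HasSum f a) :
    HasSum (fun m : ι → β => ∏ i, f (m i)) (a ^ Fintype.card ι) := by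
  classical
  set e := Fintype.equivFin ι
  have h := hasSum_pi_prod_fin hnn (Fintype.card ι) hf
  set E := Equiv.arrowCongr e (Equiv.refl β) with hE
  have h2 := (E.hasSum_iff (f := fun m : Fin (Fintype.card ι) → β => ∏ i, f (m i))).2 h
  refine h2.congr_fun fun m => ?_
  simp only [Function.comp_apply, hE, Equiv.arrowCongr_apply, Equiv.coe_refl, id_eq]
  exact (Equiv.prod_comp e.symm fun i => f (m i)).symm



lemma zetaR_nonneg (s : ℝ) : 0 ≤ zetaR s :=
  tsum_nonneg fun n => Real.rpow_nonneg (by positivity) _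

lemma one_le_bB (s : ℝ) (ν : ℕ) : 1 ≤ bB s ν := by
  have h : 0 ≤ ∑ j ∈ Finset.Icc 1 ν, (ν.choose j : ℝ) * 2^j * (j:ℝ)^(-s) * (zetaR (s/j))^j := by
    apply Finset.sum_nonneg; intro j hj
    have := zetaR_nonneg (s/j)
    positivity
  unfold bB; linarith

lemma anorm_nonneg (ν : ℕ) (n : Fin ν → ℤ) : 0 ≤ anorm ν n :=
  Finset.sum_nonneg fun _ _ => abs_nonneg _

lemma summable_oneAdd_anorm {ν : ℕ} {s : ℝ} (hν : 1 ≤ ν) (hs : (ν:ℝ) < s) :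
    Summable (fun n : Fin ν → ℤ => (1 + anorm ν n) ^ (-s)) := by
  have hν0 : (0:ℝ) < ν := by exact_mod_cast hν
  have hσ : 1 < s / ν := (one_lt_div hν0).2 hs
  have hbase : Summable (fun k : ℤ => (1+|(k:ℝ)|)^(-(s/ν))) := summable_int_one_add hσ
  have hg : Summable (fun n : Fin ν → ℤ => ∏ j, (1+|(n j : ℝ)|)^(-(s/ν))) :=
    (hasSum_pi_prod (ι := Fin ν) (fun b => Real.rpow_nonneg (by positivity) _)
      hbase.hasSum).summable
  apply Summable.of_nonneg_of_le
    (fun n => Real.rpow_nonneg (by linarith [anorm_nonneg ν n]) _) ?_ hg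
  intro n
  have h1 : ∀ j, (0:ℝ) < 1 + |(n j : ℝ)| := fun j => by positivity
  have hprodpos : (0:ℝ) < ∏ j, (1+|(n j:ℝ)|) := Finset.prod_pos fun j _ => h1 j
  have hle : (∏ j, (1+|(n j:ℝ)|)) ≤ (1 + anorm ν n)^(ν:ℕ) := by
    have hb : ∀ j ∈ Finset.univ, (1+|(n j:ℝ)|) ≤ 1 + anorm ν n := by
      intro j _
      have := Finset.single_le_sum (f := fun i => |(n i:ℝ)|) (fun i _ => abs_nonneg _)
        (Finset.mem_univ j)
      simp only [anorm]; linarith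
    calc ∏ j, (1+|(n j:ℝ)|) ≤ ∏ _j : Fin ν, (1 + anorm ν n) :=
          Finset.prod_le_prod (fun j _ => le_of_lt (h1 j)) hb
      _ = (1 + anorm ν n)^(ν:ℕ) := by
          rw [Finset.prod_const, Finset.card_univ, Fintype.card_fin]
  have hnons : 0 ≤ s / ν := by positivity
  have key : (1 + anorm ν n) ^ (-s) ≤ (∏ j, (1+|(n j:ℝ)|)) ^ (-(s/ν)) := by
    have h2 : ((1 + anorm ν n)^(ν:ℕ) : ℝ) ^ (-(s/ν)) ≤ (∏ j, (1+|(n j:ℝ)|)) ^ (-(s/ν)) :=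
      Real.rpow_le_rpow_of_nonpos hprodpos hle (neg_nonpos.2 hnons)
    have h3 : (1 + anorm ν n) ^ (-s) = ((1 + anorm ν n)^(ν:ℕ)) ^ (-(s/ν)) := by
      rw [← Real.rpow_natCast (1 + anorm ν n) ν,
        ← Real.rpow_mul (by linarith [anorm_nonneg ν n])]
      congr 1
      field_simp
    rw [h3]; exact h2
  calc (1 + anorm ν n) ^ (-s) ≤ (∏ j, (1+|(n j:ℝ)|)) ^ (-(s/ν)) := key
    _ = ∏ j, (1+|(n j:ℝ)|)^(-(s/ν)) :=
        (Real.finset_prod_rpow _ _ (fun j _ => le_of_lt (h1 j)) _).symm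

set_option maxHeartbeats 1600000 in
lemma tsum_oneAdd_anorm_le {ν : ℕ} {s : ℝ} (hν : 1 ≤ ν) (hs : (ν:ℝ) < s) :
    (∑' n : Fin ν → ℤ, (1 + anorm ν n) ^ (-s)) ≤ bB s ν := by
  classical
  set f : (Fin ν → ℤ) → ℝ := fun n => (1 + anorm ν n)^(-s) with hfdef
  have hsum : Summable f := summable_oneAdd_anorm hν hs
  have hs0 : 0 < s := lt_of_le_of_lt (by positivity) hs
  set π : (Fin ν → ℤ) → Finset (Fin ν) := fun n => Finset.univ.filter (fun i => n i ≠ 0) with hπ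
  have hoff : ∀ (n : Fin ν → ℤ) (S : Finset (Fin ν)), π n = S → ∀ i ∉ S, n i = 0 := by
    intro n S hnS i hiS
    by_contra hi
    exact hiS (hnS ▸ Finset.mem_filter.2 ⟨Finset.mem_univ _, hi⟩)
  have hon : ∀ (n : Fin ν → ℤ) (S : Finset (Fin ν)), π n = S → ∀ i ∈ S, n i ≠ 0 := by
    intro n S hnS i hiS
    rw [← hnS] at hiS
    exact (Finset.mem_filter.1 hiS).2
  set F : Finset (Fin ν) → ℝ := fun S => ∑' b : ↑(π ⁻¹' {S}), f b with hFdef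
  have hfib : HasSum F (∑' n, f n) := hsum.hasSum.tsum_fiberwise π
  have htotal : (∑' n, f n) = ∑ S : Finset (Fin ν), F S := hfib.unique (hasSum_fintype F)
  -- empty fiber
  have hempty : F ∅ = 1 := by
    haveI hsub : Subsingleton ↑(π ⁻¹' {(∅ : Finset (Fin ν))}) := by
      constructor
      intro a b
      apply Subtype.ext
      funext i
      rw [hoff a.1 ∅ a.2 i (Finset.notMem_empty i), hoff b.1 ∅ b.2 i (Finset.notMem_empty i)]
    have hz : (0 : Fin ν → ℤ) ∈ π ⁻¹' {(∅ : Finset (Fin ν))} := by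
      simp [hπ]
    have h1 : F ∅ = f (0 : Fin ν → ℤ) :=
      tsum_eq_single (⟨0, hz⟩ : ↑(π ⁻¹' {(∅ : Finset (Fin ν))}))
        (fun b' hb' => absurd (Subsingleton.elim b' _) hb')
    rw [h1, hfdef]
    simp [anorm]
  -- nonempty fibers
  have hSbound : ∀ S : Finset (Fin ν), S ≠ ∅ →
      F S ≤ (S.card:ℝ)^(-s) * (2 * zetaR (s / S.card))^S.card := by
    intro S hSne
    have hS : S.Nonempty := Finset.nonempty_iff_ne_empty.2 hSne
    have hj1 : 1 ≤ S.card := Finset.card_pos.2 hS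
    have hjν : S.card ≤ ν := by
      have := Finset.card_le_card (Finset.subset_univ S)
      simpa using this
    have hjR : (0:ℝ) < S.card := by exact_mod_cast hj1
    have hσ : 1 < s / S.card := (one_lt_div hjR).2 (lt_of_le_of_lt (by exact_mod_cast hjν) hs)
    have hbase := hasSum_int_ne_zero hσ
    have hΨ : HasSum (fun m : {i // i ∈ S} → {k : ℤ // k ≠ 0} =>
        ∏ i, |((m i : ℤ):ℝ)|^(-(s/S.card))) ((2 * zetaR (s/S.card))^S.card) := by
      have h := hasSum_pi_prod (ι := {i // i ∈ S})
        (f := fun k : {k : ℤ // k ≠ 0} => |((k : ℤ):ℝ)|^(-(s/S.card)))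
        (fun b => Real.rpow_nonneg (abs_nonneg _) _) hbase
      rwa [Fintype.card_coe] at h
    set g : ({i // i ∈ S} → {k : ℤ // k ≠ 0}) → ℝ :=
      fun m => (S.card:ℝ)^(-s) * ∏ i, |((m i : ℤ):ℝ)|^(-(s/S.card)) with hgdef
    have hgsummable : Summable g := hΨ.summable.mul_left _
    have hgtsum : ∑' m, g m = (S.card:ℝ)^(-s) * (2 * zetaR (s/S.card))^S.card := by
      rw [hgdef, tsum_mul_left, hΨ.tsum_eq]
    -- injection
    set e : ↑(π ⁻¹' {S}) → ({i // i ∈ S} → {k : ℤ // k ≠ 0}) :=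
      fun nb i => ⟨nb.1 i.1, hon nb.1 S nb.2 i.1 i.2⟩ with hedef
    have hinj : Function.Injective e := by
      intro nb nb' h
      apply Subtype.ext
      funext i
      by_cases hi : i ∈ S
      · have := congrFun h ⟨i, hi⟩
        simpa [hedef, Subtype.ext_iff] using this
      · rw [hoff nb.1 S nb.2 i hi, hoff nb'.1 S nb'.2 i hi]
    have hle : ∀ nb : ↑(π ⁻¹' {S}), f nb.1 ≤ g (e nb) := by
      rintro ⟨n, hmem⟩
      have hπS : π n = S := hmem
      have habs1 : ∀ i ∈ S, (1:ℝ) ≤ |(n i:ℝ)| := by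
        intro i hi
        have h0 : n i ≠ 0 := hon n S hπS i hi
        have : (1:ℤ) ≤ |n i| := Int.one_le_abs (by omega)
        calc (1:ℝ) ≤ ((|n i| : ℤ) : ℝ) := by exact_mod_cast this
          _ = |(n i:ℝ)| := Int.cast_abs
      have habs0 : ∀ i ∈ S, (0:ℝ) < |(n i:ℝ)| := fun i hi => lt_of_lt_of_le one_pos (habs1 i hi)
      have hanorm : anorm ν n = ∑ i ∈ S, |(n i:ℝ)| := by
        rw [anorm]
        symm
        apply Finset.sum_subset (Finset.subset_univ S)
        intro i _ hiS
        rw [hoff n S hπS i hiS]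
        simp
      have hgm := Real.geom_mean_le_arith_mean_weighted S (fun _ => 1/(S.card:ℝ))
        (fun i => |(n i:ℝ)|) (fun i _ => by positivity)
        (by
          have hwsum : ∑ _i ∈ S, 1/(S.card:ℝ) = 1 := by
            rw [Finset.sum_const, nsmul_eq_mul, mul_one_div, div_self (ne_of_gt hjR)]
          exact hwsum) (fun i _ => abs_nonneg _)
      -- hgm : ∏ i ∈ S, |n i|^(1/card) ≤ ∑ i ∈ S, (1/card) * |n i|
      have hProdPos : (0:ℝ) < ∏ i ∈ S, |(n i:ℝ)|^(1/(S.card:ℝ)) :=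
        Finset.prod_pos fun i hi => Real.rpow_pos_of_pos (habs0 i hi) _
      have hcmain : (S.card:ℝ) * ∏ i ∈ S, |(n i:ℝ)|^(1/(S.card:ℝ)) ≤ 1 + anorm ν n := by
        have h1 : (S.card:ℝ) * ∏ i ∈ S, |(n i:ℝ)|^(1/(S.card:ℝ))
            ≤ (S.card:ℝ) * ∑ i ∈ S, (1/(S.card:ℝ)) * |(n i:ℝ)| :=
          mul_le_mul_of_nonneg_left hgm (le_of_lt hjR)
        have h2 : (S.card:ℝ) * ∑ i ∈ S, (1/(S.card:ℝ)) * |(n i:ℝ)| = anorm ν n := by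
          rw [hanorm, ← Finset.mul_sum, ← mul_assoc, mul_one_div, div_self (ne_of_gt hjR), one_mul]
        have := anorm_nonneg ν n
        linarith
      have step1 : f n ≤ ((S.card:ℝ) * ∏ i ∈ S, |(n i:ℝ)|^(1/(S.card:ℝ)))^(-s) := by
        rw [hfdef]
        exact Real.rpow_le_rpow_of_nonpos (by positivity) hcmain (neg_nonpos.2 (le_of_lt hs0))
      have step2 : ((S.card:ℝ) * ∏ i ∈ S, |(n i:ℝ)|^(1/(S.card:ℝ)))^(-s)
          = (S.card:ℝ)^(-s) * ∏ i ∈ S, |(n i:ℝ)|^(-(s/S.card)) := by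
        rw [Real.mul_rpow (le_of_lt hjR) (le_of_lt hProdPos)]
        congr 1
        rw [← Real.finset_prod_rpow S _ (fun i hi => Real.rpow_nonneg (abs_nonneg _) _) (-s)]
        apply Finset.prod_congr rfl
        intro i hi
        rw [← Real.rpow_mul (abs_nonneg _)]
        congr 1
        field_simp
      have step3 : g (e ⟨n, hmem⟩) = (S.card:ℝ)^(-s) * ∏ i ∈ S, |(n i:ℝ)|^(-(s/S.card)) := by
        rw [hgdef]
        congr 1
        rw [← Finset.prod_coe_sort S (fun i => |(n i:ℝ)|^(-(s/S.card)))]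
      show f n ≤ g (e ⟨n, hmem⟩)
      rw [step3, ← step2]
      exact step1
    have hfibsummable : Summable (fun nb : ↑(π ⁻¹' {S}) => f nb.1) := hsum.subtype _
    calc F S = ∑' nb : ↑(π ⁻¹' {S}), f nb.1 := rfl
      _ ≤ ∑' m, g m :=
          Summable.tsum_le_tsum_of_inj e hinj
            (fun c _ => by
              apply mul_nonneg (Real.rpow_nonneg (le_of_lt hjR) _)
              exact Finset.prod_nonneg fun i _ => Real.rpow_nonneg (abs_nonneg _) _)
            hle hfibsummable hgsummable
      _ = _ := hgtsum
  -- assemble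
  have hW : ∀ j : ℕ, 0 ≤ (j:ℝ)^(-s) * (2 * zetaR (s/j))^j := by
    intro j
    have := zetaR_nonneg (s/j)
    positivity
  have hsplit : ∑ S : Finset (Fin ν), F S
      = F ∅ + ∑ S ∈ (Finset.univ : Finset (Finset (Fin ν))).erase ∅, F S := by
    rw [Finset.add_sum_erase _ F (Finset.mem_univ ∅)]
  have hrest : ∑ S ∈ (Finset.univ : Finset (Finset (Fin ν))).erase ∅, F S
      ≤ ∑ j ∈ Finset.Icc 1 ν, (ν.choose j : ℝ) * ((j:ℝ)^(-s) * (2 * zetaR (s/j))^j) := by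
    have step1 : ∑ S ∈ (Finset.univ : Finset (Finset (Fin ν))).erase ∅, F S
        ≤ ∑ S ∈ (Finset.univ : Finset (Finset (Fin ν))).erase ∅, ((S.card:ℝ)^(-s) * (2 * zetaR (s/S.card))^S.card) := by
      apply Finset.sum_le_sum
      intro S hS
      exact hSbound S (Finset.ne_of_mem_erase hS)
    refine le_trans step1 (le_of_eq ?_)
    rw [← Finset.sum_fiberwise_of_maps_to (g := Finset.card) (t := Finset.Icc 1 ν)
      (fun S hS => by
        rw [Finset.mem_Icc]
        refine ⟨Finset.card_pos.2 (Finset.nonempty_iff_ne_empty.2 (Finset.ne_of_mem_erase hS)), ?_⟩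
        simpa using Finset.card_le_card (Finset.subset_univ S))
      (fun S => ((S.card:ℝ)^(-s) * (2 * zetaR (s/S.card))^S.card))]
    apply Finset.sum_congr rfl
    intro j hj
    have hj1 : 1 ≤ j := (Finset.mem_Icc.1 hj).1
    have hfilter : ((Finset.univ : Finset (Finset (Fin ν))).erase ∅).filter (fun S : Finset (Fin ν) => S.card = j)
        = Finset.univ.filter (fun S : Finset (Fin ν) => S.card = j) := by
      ext S
      simp only [Finset.mem_filter, Finset.mem_erase, Finset.mem_univ, true_and, and_true]
      constructor
      · tauto
      · intro h
        refine ⟨?_, h⟩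
        intro hSe
        subst hSe
        simp at h
        omega
    rw [hfilter]
    have hval : ∀ S ∈ Finset.univ.filter (fun S : Finset (Fin ν) => S.card = j),
        ((S.card:ℝ)^(-s) * (2 * zetaR (s/S.card))^S.card)
          = ((j:ℝ)^(-s) * (2 * zetaR (s/j))^j) := by
      intro S hS
      have := (Finset.mem_filter.1 hS).2
      rw [this]
    rw [Finset.sum_congr rfl hval, Finset.sum_const, nsmul_eq_mul]
    congr 2
    rw [← Finset.powerset_univ, ← Finset.powersetCard_eq_filter, Finset.card_powersetCard]
    simp
  have hfinal : (∑' n, f n) ≤ 1 + ∑ j ∈ Finset.Icc 1 ν,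
      (ν.choose j : ℝ) * ((j:ℝ)^(-s) * (2 * zetaR (s/j))^j) := by
    rw [htotal, hsplit, hempty]
    linarith
  refine le_trans hfinal (le_of_eq ?_)
  unfold bB
  congr 1
  apply Finset.sum_congr rfl
  intro j hj
  rw [mul_pow]
  ring

/-- L^∞ asymptotic closeness of the nonlinear solution of the weakly
nonlinear Schrödinger equation to the linear solution, within the time scale. -/
theorem statement13 (ν p : ℕ) (hν : 2 ≤ ν) (hp : 1 ≤ p) (ω : Fin ν → ℝ)
    (hres : ∀ n : Fin ν → ℤ, ip ν ω n = 0 → n = 0)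
    (c : (Fin ν → ℤ) → ℂ) (r B ε T : ℝ) (hr : 8 < r) (hνr : (ν : ℝ) < r/4)
    (hB : 0 < B) (hT : 0 < T)
    (cc : ℝ → (Fin ν → ℤ) → ℂ)
    (heq : ∀ t ∈ Set.Icc (0:ℝ) T, ∀ n : Fin ν → ℤ,
      cc t n = Complex.exp (-Complex.I * ((ip ν ω n)^2 : ℝ) * (t : ℂ)) * c n
        + Complex.I * (ε : ℂ) * ∫ s in (0:ℝ)..t,
            Complex.exp (-Complex.I * ((ip ν ω n)^2 : ℝ) * ((t - s : ℝ) : ℂ)) *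
            ∑' m : {m : Fin (2*p+1) → (Fin ν → ℤ) //
                      ∑ j : Fin (2*p+1), ((-1:ℤ))^(j:ℕ) • m j = n},
              ∏ j : Fin (2*p+1), cstar j (cc s (m.1 j)))
    (hdecay : ∀ t ∈ Set.Icc (0:ℝ) T, ∀ n : Fin ν → ℤ,
      ‖cc t n‖ ≤ B * (1 + anorm ν n) ^ (-(r/2))) :
    (∀ t ∈ Set.Icc (0:ℝ) T, ∀ x : ℝ,
      ‖(∑' n : Fin ν → ℤ,
        (cc t n - Complex.exp (-Complex.I * ((ip ν ω n)^2 : ℝ) * (t : ℂ)) * c n) *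
          Complex.exp (Complex.I * ((ip ν ω n : ℝ) : ℂ) * (x : ℂ)))‖
        ≤ |ε| * t * B^(2*p+1) * (bB (r/4) ν)^(2*p+1+1)) ∧
    (∀ η : ℝ, 0 < η → η < 1 → ε ≠ 0 → |ε| ^ (-1+η) ≤ T → ∀ x : ℝ,
      ‖(∑' n : Fin ν → ℤ,
        (cc (|ε| ^ (-1+η)) n
            - Complex.exp (-Complex.I * ((ip ν ω n)^2 : ℝ) * ((|ε| ^ (-1+η) : ℝ) : ℂ)) * c n) *
          Complex.exp (Complex.I * ((ip ν ω n : ℝ) : ℂ) * (x : ℂ)))‖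
        ≤ |ε| ^ η * B^(2*p+1) * (bB (r/4) ν)^(2*p+1+1)) := by
  classical
  have hν1 : 1 ≤ ν := le_trans one_le_two hν
  have hr0 : 0 < r := by linarith
  set f : (Fin ν → ℤ) → ℝ := fun n => (1 + anorm ν n)^(-(r/4)) with hfdef
  have hf_nonneg : ∀ n, 0 ≤ f n :=
    fun n => Real.rpow_nonneg (by linarith [anorm_nonneg ν n]) _
  have hsumf : Summable f := summable_oneAdd_anorm hν1 hνr
  have htsumf_le : (∑' n, f n) ≤ bB (r/4) ν := tsum_oneAdd_anorm_le hν1 hνr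
  have htsumf_nonneg : 0 ≤ ∑' n, f n := tsum_nonneg hf_nonneg
  have hbB1 : 1 ≤ bB (r/4) ν := one_le_bB _ _
  have hdecf : ∀ t ∈ Set.Icc (0:ℝ) T, ∀ n, ‖cc t n‖ ≤ B * f n := by
    intro t ht n
    refine le_trans (hdecay t ht n) ?_
    refine mul_le_mul_of_nonneg_left ?_ (le_of_lt hB)
    apply Real.rpow_le_rpow_of_exponent_le (by linarith [anorm_nonneg ν n])
    linarith
  set Φ : (Fin (2*p+1) → (Fin ν → ℤ)) → ℝ := fun m => ∏ j, f (m j) with hΦdef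
  have hΦ_hasSum : HasSum Φ ((∑' n, f n)^(2*p+1)) := by
    have h := hasSum_pi_prod (ι := Fin (2*p+1)) hf_nonneg hsumf.hasSum
    rwa [Fintype.card_fin] at h
  have hΦ_nonneg : ∀ m, 0 ≤ Φ m := fun m => Finset.prod_nonneg fun _ _ => hf_nonneg _
  set π : (Fin (2*p+1) → (Fin ν → ℤ)) → (Fin ν → ℤ) :=
    fun m => ∑ j : Fin (2*p+1), ((-1:ℤ))^(j:ℕ) • m j with hπdef
  set h : (Fin ν → ℤ) → ℝ := fun n => ∑' m : ↑(π ⁻¹' {n}), Φ m.1 with hhdef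
  have hh_hasSum : HasSum h ((∑' n, f n)^(2*p+1)) := hΦ_hasSum.tsum_fiberwise π
  have hh_nonneg : ∀ n, 0 ≤ h n := fun n => tsum_nonneg fun m => hΦ_nonneg _
  have hfibsummable : ∀ n : Fin ν → ℤ, Summable (fun m : ↑(π ⁻¹' {n}) => Φ m.1) :=
    fun n => hΦ_hasSum.summable.subtype _
  have hexp1 : ∀ (a b : ℝ), ‖Complex.exp (-Complex.I * (a:ℂ) * (b:ℂ))‖ = 1 := by
    intro a b
    rw [Complex.norm_exp]
    have hre : (-Complex.I * (a:ℂ) * (b:ℂ)).re = 0 := by simp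
    rw [hre, Real.exp_zero]
  have hexp2 : ∀ (a b : ℝ), ‖Complex.exp (Complex.I * (a:ℂ) * (b:ℂ))‖ = 1 := by
    intro a b
    rw [Complex.norm_exp]
    have hre : (Complex.I * (a:ℂ) * (b:ℂ)).re = 0 := by simp
    rw [hre, Real.exp_zero]
  have habs_cstar : ∀ (j : ℕ) (z : ℂ), ‖cstar j z‖ = ‖z‖ := by
    intro j z
    rw [cstar]
    split_ifs <;> simp
  -- bound on the inner sum
  have hinner : ∀ s' ∈ Set.Icc (0:ℝ) T, ∀ n : Fin ν → ℤ,
      ‖∑' m : {m : Fin (2*p+1) → (Fin ν → ℤ) //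
            ∑ j : Fin (2*p+1), ((-1:ℤ))^(j:ℕ) • m j = n},
          ∏ j : Fin (2*p+1), cstar j (cc s' (m.1 j))‖ ≤ B^(2*p+1) * h n := by
    intro s' hs' n
    have hbound : ∀ m : ↑(π ⁻¹' {n}),
        ‖∏ j : Fin (2*p+1), cstar j (cc s' (m.1 j))‖ ≤ B^(2*p+1) * Φ m.1 := by
      intro m
      rw [norm_prod]
      calc ∏ j : Fin (2*p+1), ‖cstar (j:ℕ) (cc s' (m.1 j))‖
          ≤ ∏ j : Fin (2*p+1), (B * f (m.1 j)) := by
            apply Finset.prod_le_prod (fun j _ => norm_nonneg _)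
            intro j _
            rw [habs_cstar]
            exact hdecf s' hs' (m.1 j)
        _ = B^(2*p+1) * Φ m.1 := by
            rw [Finset.prod_mul_distrib, Finset.prod_const, Finset.card_univ, Fintype.card_fin,
              hΦdef]
    have hbsummable : Summable (fun m : ↑(π ⁻¹' {n}) => B^(2*p+1) * Φ m.1) :=
      (hfibsummable n).mul_left _
    have hnormsummable : Summable (fun m : ↑(π ⁻¹' {n}) =>
        ‖∏ j : Fin (2*p+1), cstar j (cc s' (m.1 j))‖) :=
      Summable.of_nonneg_of_le (fun m => norm_nonneg _) hbound hbsummable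
    have key : ‖∑' m : ↑(π ⁻¹' {n}), ∏ j : Fin (2*p+1), cstar j (cc s' (m.1 j))‖
        ≤ B^(2*p+1) * h n := by
      calc ‖∑' m : ↑(π ⁻¹' {n}), ∏ j : Fin (2*p+1), cstar j (cc s' (m.1 j))‖
          ≤ ∑' m : ↑(π ⁻¹' {n}), ‖∏ j : Fin (2*p+1), cstar j (cc s' (m.1 j))‖ := by
            have := norm_tsum_le_tsum_norm (f := fun m : ↑(π ⁻¹' {n}) =>
              ∏ j : Fin (2*p+1), cstar j (cc s' (m.1 j))) (by simpa
                using hnormsummable)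
            simpa using this
        _ ≤ ∑' m : ↑(π ⁻¹' {n}), (B^(2*p+1) * Φ m.1) :=
            Summable.tsum_le_tsum hbound hnormsummable hbsummable
        _ = B^(2*p+1) * h n := by rw [hhdef, tsum_mul_left]
    exact key
  -- main pointwise estimate
  have hmain : ∀ t ∈ Set.Icc (0:ℝ) T, ∀ n : Fin ν → ℤ,
      ‖cc t n - Complex.exp (-Complex.I * ((ip ν ω n)^2 : ℝ) * (t : ℂ)) * c n‖
        ≤ |ε| * (B^(2*p+1) * h n) * t := by
    intro t ht n
    have hdiff : cc t n - Complex.exp (-Complex.I * ((ip ν ω n)^2 : ℝ) * (t : ℂ)) * c n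
        = Complex.I * (ε : ℂ) * ∫ s in (0:ℝ)..t,
            Complex.exp (-Complex.I * ((ip ν ω n)^2 : ℝ) * ((t - s : ℝ) : ℂ)) *
            ∑' m : {m : Fin (2*p+1) → (Fin ν → ℤ) //
                      ∑ j : Fin (2*p+1), ((-1:ℤ))^(j:ℕ) • m j = n},
              ∏ j : Fin (2*p+1), cstar j (cc s (m.1 j)) := by
      rw [heq t ht n]; ring
    rw [hdiff, norm_mul, norm_mul, Complex.norm_I, Complex.norm_real, Real.norm_eq_abs, one_mul]
    have hint : ‖∫ s in (0:ℝ)..t,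
        Complex.exp (-Complex.I * ((ip ν ω n)^2 : ℝ) * ((t - s : ℝ) : ℂ)) *
        ∑' m : {m : Fin (2*p+1) → (Fin ν → ℤ) //
                  ∑ j : Fin (2*p+1), ((-1:ℤ))^(j:ℕ) • m j = n},
          ∏ j : Fin (2*p+1), cstar j (cc s (m.1 j))‖ ≤ (B^(2*p+1) * h n) * t := by
      have hb := intervalIntegral.norm_integral_le_of_norm_le_const
        (a := (0:ℝ)) (b := t) (C := B^(2*p+1) * h n)
        (f := fun s => Complex.exp (-Complex.I * ((ip ν ω n)^2 : ℝ) * ((t - s : ℝ) : ℂ)) *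
          ∑' m : {m : Fin (2*p+1) → (Fin ν → ℤ) //
                    ∑ j : Fin (2*p+1), ((-1:ℤ))^(j:ℕ) • m j = n},
            ∏ j : Fin (2*p+1), cstar j (cc s (m.1 j))) ?_
      · calc ‖_‖ ≤ (B^(2*p+1) * h n) * |t - 0| := hb
          _ = (B^(2*p+1) * h n) * t := by rw [sub_zero, abs_of_nonneg ht.1]
      · intro x hx
        have hx' : x ∈ Set.Icc (0:ℝ) T := by
          rw [Set.uIoc_of_le ht.1] at hx
          exact ⟨le_of_lt hx.1, le_trans hx.2 ht.2⟩
        rw [norm_mul, hexp1, one_mul]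
        exact hinner x hx' n
    calc |ε| * ‖∫ s in (0:ℝ)..t,
          Complex.exp (-Complex.I * ((ip ν ω n)^2 : ℝ) * ((t - s : ℝ) : ℂ)) *
          ∑' m : {m : Fin (2*p+1) → (Fin ν → ℤ) //
                    ∑ j : Fin (2*p+1), ((-1:ℤ))^(j:ℕ) • m j = n},
            ∏ j : Fin (2*p+1), cstar j (cc s (m.1 j))‖
        ≤ |ε| * ((B^(2*p+1) * h n) * t) := mul_le_mul_of_nonneg_left hint (abs_nonneg ε)
      _ = |ε| * (B^(2*p+1) * h n) * t := by ring
  -- part 1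
  have part1 : ∀ t ∈ Set.Icc (0:ℝ) T, ∀ x : ℝ,
      ‖∑' n : Fin ν → ℤ,
        (cc t n - Complex.exp (-Complex.I * ((ip ν ω n)^2 : ℝ) * (t : ℂ)) * c n) *
          Complex.exp (Complex.I * ((ip ν ω n : ℝ) : ℂ) * (x : ℂ))‖
        ≤ |ε| * t * B^(2*p+1) * (bB (r/4) ν)^(2*p+1+1) := by
    intro t ht x
    have hterm : ∀ n : Fin ν → ℤ,
        ‖(cc t n - Complex.exp (-Complex.I * ((ip ν ω n)^2 : ℝ) * (t : ℂ)) * c n) *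
          Complex.exp (Complex.I * ((ip ν ω n : ℝ) : ℂ) * (x : ℂ))‖
          ≤ (|ε| * B^(2*p+1) * t) * h n := by
      intro n
      rw [norm_mul, hexp2, mul_one]
      calc ‖_‖ ≤ |ε| * (B^(2*p+1) * h n) * t := hmain t ht n
        _ = (|ε| * B^(2*p+1) * t) * h n := by ring
    have hbnd_summable : Summable (fun n : Fin ν → ℤ => (|ε| * B^(2*p+1) * t) * h n) :=
      hh_hasSum.summable.mul_left _
    have hts : Summable (fun n : Fin ν → ℤ =>
        (cc t n - Complex.exp (-Complex.I * ((ip ν ω n)^2 : ℝ) * (t : ℂ)) * c n) *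
          Complex.exp (Complex.I * ((ip ν ω n : ℝ) : ℂ) * (x : ℂ))) :=
      Summable.of_norm_bounded hbnd_summable hterm
    have hns : Summable (fun n : Fin ν → ℤ =>
        ‖(cc t n - Complex.exp (-Complex.I * ((ip ν ω n)^2 : ℝ) * (t : ℂ)) * c n) *
          Complex.exp (Complex.I * ((ip ν ω n : ℝ) : ℂ) * (x : ℂ))‖) :=
      Summable.of_nonneg_of_le (fun n => norm_nonneg _) hterm hbnd_summable
    have hpow : (∑' n, f n)^(2*p+1) ≤ (bB (r/4) ν)^(2*p+1+1) := by
      calc (∑' n, f n)^(2*p+1) ≤ (bB (r/4) ν)^(2*p+1) :=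
            pow_le_pow_left₀ htsumf_nonneg htsumf_le _
        _ ≤ (bB (r/4) ν)^(2*p+1+1) := pow_le_pow_right₀ hbB1 (Nat.le_succ _)
    calc ‖∑' n : Fin ν → ℤ,
          (cc t n - Complex.exp (-Complex.I * ((ip ν ω n)^2 : ℝ) * (t : ℂ)) * c n) *
            Complex.exp (Complex.I * ((ip ν ω n : ℝ) : ℂ) * (x : ℂ))‖
        ≤ ∑' n : Fin ν → ℤ,
            ‖(cc t n - Complex.exp (-Complex.I * ((ip ν ω n)^2 : ℝ) * (t : ℂ)) * c n) *
              Complex.exp (Complex.I * ((ip ν ω n : ℝ) : ℂ) * (x : ℂ))‖ := by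
          exact norm_tsum_le_tsum_norm hns
      _ ≤ ∑' n : Fin ν → ℤ, (|ε| * B^(2*p+1) * t) * h n := Summable.tsum_le_tsum hterm hns hbnd_summable
      _ = (|ε| * B^(2*p+1) * t) * ((∑' n, f n)^(2*p+1)) := by
          rw [tsum_mul_left, hh_hasSum.tsum_eq]
      _ ≤ (|ε| * B^(2*p+1) * t) * ((bB (r/4) ν)^(2*p+1+1)) := by
          apply mul_le_mul_of_nonneg_left hpow
          have : (0:ℝ) ≤ B^(2*p+1) := le_of_lt (pow_pos hB _)
          have := ht.1
          positivity
      _ = |ε| * t * B^(2*p+1) * (bB (r/4) ν)^(2*p+1+1) := by ring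
  refine ⟨part1, ?_⟩
  intro η hη0 hη1 hε hT' x
  have ht0 : (0:ℝ) ≤ |ε|^(-1+η) := Real.rpow_nonneg (abs_nonneg ε) _
  have hεpos : 0 < |ε| := abs_pos.2 hε
  have hkey := part1 (|ε|^(-1+η)) ⟨ht0, hT'⟩ x
  have hmul : |ε| * |ε|^(-1+η) = |ε|^η := by
    calc |ε| * |ε|^(-1+η) = |ε|^(1:ℝ) * |ε|^(-1+η) := by rw [Real.rpow_one]
      _ = |ε|^((1:ℝ) + (-1+η)) := (Real.rpow_add hεpos _ _).symm
      _ = |ε|^η := by norm_num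
  calc ‖∑' n : Fin ν → ℤ,
        (cc (|ε| ^ (-1+η)) n
            - Complex.exp (-Complex.I * ((ip ν ω n)^2 : ℝ) * ((|ε| ^ (-1+η) : ℝ) : ℂ)) * c n) *
          Complex.exp (Complex.I * ((ip ν ω n : ℝ) : ℂ) * (x : ℂ))‖
      ≤ |ε| * |ε|^(-1+η) * B^(2*p+1) * (bB (r/4) ν)^(2*p+1+1) := hkey
    _ = |ε|^η * B^(2*p+1) * (bB (r/4) ν)^(2*p+1+1) := by rw [hmul]

end
end

section
/- Let p ≥ 1 be an integer and P = 2p+1. If 0 < ◊ ≤ (2p)^{2p} / P^P, then for every k ≥ 1, Σ_{γ ∈ Γ^{(k)}} ◊^{ℓ(γ)} / 𝔇(γ) ≤ P/(2p). -/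
open scoped BigOperators
noncomputable section

lemma dF_pos (P : ℕ) : ∀ k (γ : Gamma P k), 0 < dF P k γ
  | 0, false => Nat.one_pos
  | 0, true => Nat.one_pos
  | _+1, none => Nat.one_pos
  | k+1, some f => by
      rw [dF]
      exact Nat.mul_pos (Nat.add_pos_left Nat.one_pos _)
        (Finset.prod_pos fun j _ => dF_pos P k (f j))

/-- if 0 < ◊ ≤ (2p)^{2p}/P^P then Σ_{γ∈Γ^{(k)}} ◊^{ℓ(γ)}/𝔇(γ) ≤ P/(2p). -/
theorem statement17 (p : ℕ) (hp : 1 ≤ p) (d : ℝ) (hd0 : 0 < d)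
    (hd : d ≤ ((2*p : ℝ))^(2*p) / ((2*p+1 : ℝ))^(2*p+1)) (k : ℕ) :
    ∑ γ : Gamma (2*p+1) k, d ^ (ellF (2*p+1) k γ) / (dF (2*p+1) k γ : ℝ)
      ≤ (2*p+1 : ℝ)/(2*p) := by
  have hp2 : (0:ℝ) < 2*p := by positivity
  have hP : (0:ℝ) < 2*p+1 := by positivity
  have hdinv : d ≤ 1/(2*p) := by
    refine hd.trans ?_
    rw [div_le_div_iff₀ (by positivity) hp2]
    have : ((2*p:ℝ))^(2*p) * (2*p) = (2*p:ℝ)^(2*p+1) := by ring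
    rw [this, one_mul]
    exact pow_le_pow_left₀ hp2.le (by linarith) _
  induction k with
  | zero =>
      rw [show (∑ γ : Gamma (2*p+1) 0, d ^ (ellF (2*p+1) 0 γ) / (dF (2*p+1) 0 γ : ℝ))
          = d ^ (ellF (2*p+1) 0 true) / (dF (2*p+1) 0 true : ℝ)
            + d ^ (ellF (2*p+1) 0 false) / (dF (2*p+1) 0 false : ℝ) from Fintype.sum_bool _]
      simp only [ellF, dF]
      have h1 : ((2*p:ℝ)+1)/(2*p) = 1 + 1/(2*p) := by field_simp
      norm_num
      rw [h1]
      linarith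
  | succ k ih =>
      have hsplit : (∑ γ : Gamma (2*p+1) (k+1),
            d ^ (ellF (2*p+1) (k+1) γ) / (dF (2*p+1) (k+1) γ : ℝ))
          = d ^ (ellF (2*p+1) (k+1) none) / (dF (2*p+1) (k+1) none : ℝ)
            + ∑ f : Fin (2*p+1) → Gamma (2*p+1) k,
                d ^ (ellF (2*p+1) (k+1) (some f)) / (dF (2*p+1) (k+1) (some f) : ℝ) :=
        Fintype.sum_option _
      rw [hsplit]
      have hnone : d ^ (ellF (2*p+1) (k+1) (none : Gamma (2*p+1) (k+1)))
          / (dF (2*p+1) (k+1) none : ℝ) = 1 := by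
        simp [ellF, dF]
      rw [hnone]
      have hterm : ∀ f : Fin (2*p+1) → Gamma (2*p+1) k,
          d ^ (ellF (2*p+1) (k+1) (some f)) / (dF (2*p+1) (k+1) (some f) : ℝ)
            ≤ d * ∏ j : Fin (2*p+1), d ^ (ellF (2*p+1) k (f j)) / (dF (2*p+1) k (f j) : ℝ) := by
        intro f
        have hprodpos : (0:ℝ) < ∏ j : Fin (2*p+1), (dF (2*p+1) k (f j) : ℝ) :=
          Finset.prod_pos fun j _ => by exact_mod_cast dF_pos _ _ _
        rw [show ellF (2*p+1) (k+1) (some f) = 1 + ∑ j : Fin (2*p+1), ellF (2*p+1) k (f j) from rfl,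
            show dF (2*p+1) (k+1) (some f)
              = (1 + ∑ j : Fin (2*p+1), ellF (2*p+1) k (f j)) * ∏ j : Fin (2*p+1), dF (2*p+1) k (f j) from rfl]
        have hnum : d ^ (1 + ∑ j : Fin (2*p+1), ellF (2*p+1) k (f j))
            = d * ∏ j : Fin (2*p+1), d ^ (ellF (2*p+1) k (f j)) := by
          rw [pow_add, pow_one, Finset.prod_pow_eq_pow_sum]
        rw [hnum, Finset.prod_div_distrib]
        rw [mul_div_assoc]
        apply mul_le_mul_of_nonneg_left _ hd0.le
        push_cast
        apply div_le_div_of_nonneg_left (Finset.prod_nonneg fun j _ => by positivity) hprodpos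
        calc (∏ j : Fin (2*p+1), (dF (2*p+1) k (f j) : ℝ))
            = 1 * ∏ j : Fin (2*p+1), (dF (2*p+1) k (f j) : ℝ) := (one_mul _).symm
          _ ≤ (1 + (∑ j : Fin (2*p+1), (ellF (2*p+1) k (f j) : ℝ))) * ∏ j, (dF (2*p+1) k (f j) : ℝ) := by
              apply mul_le_mul_of_nonneg_right _ hprodpos.le
              have : (0:ℝ) ≤ ∑ j : Fin (2*p+1), (ellF (2*p+1) k (f j) : ℝ) :=
                Finset.sum_nonneg fun j _ => by positivity
              linarith
      have hsum : ∑ f : Fin (2*p+1) → Gamma (2*p+1) k,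
            d ^ (ellF (2*p+1) (k+1) (some f)) / (dF (2*p+1) (k+1) (some f) : ℝ)
          ≤ d * (∑ γ : Gamma (2*p+1) k, d ^ (ellF (2*p+1) k γ) / (dF (2*p+1) k γ : ℝ)) ^ (2*p+1) := by
        rw [Fintype.sum_pow, Finset.mul_sum]
        exact Finset.sum_le_sum fun f _ => hterm f
      have hSnn : (0:ℝ) ≤ ∑ γ : Gamma (2*p+1) k, d ^ (ellF (2*p+1) k γ) / (dF (2*p+1) k γ : ℝ) :=
        Finset.sum_nonneg fun γ _ => by positivity
      have hpow : (∑ γ : Gamma (2*p+1) k, d ^ (ellF (2*p+1) k γ) / (dF (2*p+1) k γ : ℝ)) ^ (2*p+1)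
          ≤ ((2*p+1:ℝ)/(2*p)) ^ (2*p+1) := pow_le_pow_left₀ hSnn ih _
      have hfinal : d * ((2*p+1:ℝ)/(2*p)) ^ (2*p+1) ≤ 1/(2*p) := by
        calc d * ((2*p+1:ℝ)/(2*p)) ^ (2*p+1)
            ≤ ((2*p : ℝ))^(2*p) / ((2*p+1 : ℝ))^(2*p+1) * ((2*p+1:ℝ)/(2*p)) ^ (2*p+1) :=
              mul_le_mul_of_nonneg_right hd (by positivity)
          _ = 1/(2*p) := by
              rw [div_pow]
              field_simp
              ring
      have : d * (∑ γ : Gamma (2*p+1) k, d ^ (ellF (2*p+1) k γ) / (dF (2*p+1) k γ : ℝ)) ^ (2*p+1)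
          ≤ 1/(2*p) :=
        le_trans (mul_le_mul_of_nonneg_left hpow hd0.le) hfinal
      have h1 : ((2*p:ℝ)+1)/(2*p) = 1 + 1/(2*p) := by field_simp
      push_cast
      push_cast at h1 hsum this ⊢
      linarith

end
end
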